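/- arXiv:2510.24967 — 2 statements merged into one kernel-verified Lean document; each statement's English description precedes it below -/
import Mathlib

section
/- Let f : ℝⁿ → ℝ be twice continuously differentiable, μ-strongly convex with μ > 0, and with L-Lipschitz Hessian, L > 0. Let σ ∈ (0,1] and 0 < ω ≤ ξ with ξ > 1. Suppose x⁺ ∈ ℝⁿ is obtained from x ∈ ℝⁿ in one of the following two ways: (a) x⁺ = x − P(R∇²f(x)P)⁻¹R∇f(x) is a coarse step for some full-row-rank R ∈ ℝ^{p×n} with P := Rᵀ whose singular values all lie in [ω, ξ], and the acceptance condition ‖R∇f(x⁺)‖ ≥ σ‖∇f(x⁺)‖ holds; or (b) x⁺ = x − ∇²f(x)⁻¹∇f(x) is the full Newton step. Then ‖∇f(x⁺)‖ ≤ (Lξ⁵/(2σμ²ω⁴)) ‖∇f(x)‖². -/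
/-!
Write `x⁺ = x - d`. Taylor's formula with an `L`-Lipschitz Hessian bounds the residual
`∇f(x⁺) - ∇f(x) + ∇²f(x) d` by `L/2 ‖d‖²`. The coarse step solves the Newton equation after
restriction by `R`, i.e. `R ∇²f(x) d = R ∇f(x)`, so `R ∇f(x⁺)` is `R` applied to that residual.
Strong convexity and `ω² ≤ R Rᵀ`, `‖R‖ ≤ ξ` give `R ∇²f(x) Rᵀ ≥ μω²`, hence
`‖d‖ ≤ ξ²/(μω²) ‖∇f(x)‖` and `‖R ∇f(x⁺)‖ ≤ Lξ⁵/(2μ²ω⁴) ‖∇f(x)‖²`; the acceptance condition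
costs the factor `1/σ`. The full Newton step is the coarse step with `R = 1`, and its constant
`L/(2μ²)` is smaller since `σω⁴ ≤ ξ⁵`.
-/

open Matrix

noncomputable section

/-- The spectral (`ℓ²`-operator) norm of a real matrix, i.e. the operator norm of the
induced linear map between Euclidean spaces. -/
def Matrix.specNorm {m n : ℕ} (A : Matrix (Fin m) (Fin n) ℝ) : ℝ :=
  ‖LinearMap.toContinuousLinearMap (Matrix.toEuclideanLin A)‖

/-- The `i`-th singular value of `P := Rᵀ`, i.e. the square root of the `i`-th eigenvalue of
the positive semidefinite matrix `PᴴP = R Rᴴ`. -/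
def Matrix.singularValueT {p n : ℕ} (R : Matrix (Fin p) (Fin n) ℝ) (i : Fin p) : ℝ :=
  Real.sqrt ((Matrix.isHermitian_mul_conjTranspose_self R).eigenvalues i)

open scoped Matrix.Norms.L2Operator MatrixOrder

theorem norm_sub_sub_fderiv_le_of_lipschitz {E F : Type*} [NormedAddCommGroup E]
    [NormedSpace ℝ E] [NormedAddCommGroup F] [NormedSpace ℝ F] {g : E → F} {g' : E → E →L[ℝ] F}
    {L : ℝ} (hg : ∀ y, HasFDerivAt g (g' y) y) (hg' : ∀ y z, ‖g' y - g' z‖ ≤ L * ‖y - z‖)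
    (x d : E) : ‖g (x + d) - g x - g' x d‖ ≤ L / 2 * ‖d‖ ^ 2 := by
  set φ : ℝ → F := fun t ↦ g (x + t • d) - g x - t • g' x d
  have hφ : ∀ t : ℝ, HasDerivAt φ (g' (x + t • d) d - g' x d) t := fun t ↦ by
    have hline : HasDerivAt (fun t : ℝ ↦ x + t • d) d t := by
      simpa using ((hasDerivAt_id t).smul_const d).const_add x
    convert (((hg _).comp_hasDerivAt t hline).sub_const (g x)).sub
      ((hasDerivAt_id' t).smul_const (g' x d)) using 1
    · rfl
    · rw [one_smul]
  have hbound : ∀ t ∈ Set.Ico (0 : ℝ) 1, ‖g' (x + t • d) d - g' x d‖ ≤ L * ‖d‖ ^ 2 * t :=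
    fun t ht ↦ calc
      ‖g' (x + t • d) d - g' x d‖ ≤ ‖g' (x + t • d) - g' x‖ * ‖d‖ :=
        (g' (x + t • d) - g' x).le_opNorm d
      _ ≤ L * ‖t • d‖ * ‖d‖ := by gcongr; simpa using hg' (x + t • d) x
      _ = L * ‖d‖ ^ 2 * t := by rw [norm_smul, Real.norm_of_nonneg ht.1]; ring
  have hmajorant (t : ℝ) :
      HasDerivAt (fun t : ℝ ↦ L * ‖d‖ ^ 2 * t ^ 2 / 2) (L * ‖d‖ ^ 2 * t) t := by
    simpa using ((hasDerivAt_pow 2 t).const_mul (L * ‖d‖ ^ 2) |>.div_const 2).congr_deriv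
      (by ring)
  have := image_norm_le_of_norm_deriv_right_le_deriv_boundary
    (fun t _ ↦ (hφ t).continuousAt.continuousWithinAt) (fun t _ ↦ (hφ t).hasDerivWithinAt)
    (by simp [φ]) hmajorant hbound (Set.right_mem_Icc.mpr zero_le_one)
  simp only [φ, one_smul, one_pow, mul_one] at this
  linarith

namespace Matrix

variable {m n k : Type*}

theorem IsHermitian.posSemidef_sub_smul_one_iff [Fintype n] [DecidableEq n] {A : Matrix n n ℝ}
    (hA : A.IsHermitian) (c : ℝ) : (A - c • 1).PosSemidef ↔ ∀ i, c ≤ hA.eigenvalues i := by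
  rw [← le_iff, ← Algebra.algebraMap_eq_smul_one, algebraMap_le_iff_le_spectrum
    (isHermitian_iff_isSelfAdjoint.mp hA), hA.spectrum_real_eq_range_eigenvalues,
    Set.forall_mem_range]

theorem IsHermitian.l2_opNorm_le_iff [Fintype n] [DecidableEq n] {A : Matrix n n ℝ}
    (hA : A.IsHermitian) {c : ℝ} (hc : 0 ≤ c) : ‖A‖ ≤ c ↔ ∀ i, |hA.eigenvalues i| ≤ c := by
  conv_lhs => rw [← cfc_id' ℝ A (isHermitian_iff_isSelfAdjoint.mp hA)]
  rw [norm_cfc_le_iff _ _ hc, hA.spectrum_real_eq_range_eigenvalues, Set.forall_mem_range]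
  rfl

theorem l2_opNorm_mul_transpose_self [Fintype m] [DecidableEq m] [Fintype n] [DecidableEq n]
    (A : Matrix m n ℝ) : ‖A * Aᵀ‖ = ‖A‖ * ‖A‖ := by
  rw [← conjTranspose_eq_transpose_of_trivial, ← l2_opNorm_conjTranspose A,
    ← l2_opNorm_conjTranspose_mul_self, conjTranspose_conjTranspose]

theorem l2_opNorm_one_le [Fintype n] [DecidableEq n] : ‖(1 : Matrix n n ℝ)‖ ≤ 1 := by
  rw [← l2_opNorm_toEuclideanCLM, map_one]
  exact ContinuousLinearMap.norm_id_le

theorem PosSemidef.posDef_of_sub_smul_one [DecidableEq n] {A : Matrix n n ℝ} {c : ℝ}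
    (hc : 0 < c) (hA : (A - c • 1).PosSemidef) : A.PosDef := by
  simpa using PosDef.posSemidef_add hA (PosDef.one.smul hc)

theorem l2_opNorm_inv_le [Fintype n] [DecidableEq n] {A : Matrix n n ℝ} {c : ℝ} (hc : 0 < c)
    (hA : (A - c • 1).PosSemidef) : ‖A⁻¹‖ ≤ c⁻¹ := by
  have hApos := hA.posDef_of_sub_smul_one hc
  have hspec : ∀ x ∈ spectrum ℝ A, c ≤ x := by
    rwa [← algebraMap_le_iff_le_spectrum (isHermitian_iff_isSelfAdjoint.mp hApos.1),
      Algebra.algebraMap_eq_smul_one, le_iff]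
  rw [← hApos.isUnit.unit_spec, ← coe_units_inv, ← cfc_inv_id (R := ℝ) hApos.isUnit.unit]
  refine norm_cfc_le (by positivity) fun x hx ↦ ?_
  have hcx := hspec x hx
  rw [norm_inv, Real.norm_of_nonneg (hc.le.trans hcx)]
  exact inv_anti₀ hc hcx

theorem PosSemidef.mul_mul_transpose_sub_smul_one [Fintype m] [DecidableEq m] [Fintype n]
    [DecidableEq n] {A : Matrix n n ℝ} {R : Matrix m n ℝ} {μ ω : ℝ} (hμ : 0 ≤ μ)
    (hA : (A - μ • 1).PosSemidef) (hR : (R * Rᵀ - ω • 1).PosSemidef) :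
    (R * A * Rᵀ - (μ * ω) • 1).PosSemidef := by
  convert (hA.mul_mul_conjTranspose_same R).add (hR.smul hμ) using 1
  simp only [conjTranspose_eq_transpose_of_trivial, Matrix.mul_sub, Matrix.sub_mul, smul_sub,
    Matrix.mul_smul, Matrix.smul_mul, Matrix.mul_one, smul_smul]
  abel

theorem l2_opNorm_le_of_singularValueT_le {p q : ℕ} {R : Matrix (Fin p) (Fin q) ℝ} {ξ : ℝ}
    (hξ : 0 ≤ ξ) (h : ∀ i, R.singularValueT i ≤ ξ) : ‖R‖ ≤ ξ := by
  have hRR := isHermitian_mul_conjTranspose_self R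
  have : ‖R‖ * ‖R‖ ≤ ξ * ξ := by
    rw [← l2_opNorm_mul_transpose_self, ← conjTranspose_eq_transpose_of_trivial,
      hRR.l2_opNorm_le_iff (by positivity)]
    intro i
    rw [abs_of_nonneg (eigenvalues_self_mul_conjTranspose_nonneg R i), ← sq,
      ← Real.sqrt_le_left hξ]
    exact h i
  exact (mul_self_le_mul_self_iff (norm_nonneg R) hξ).mpr this

theorem posSemidef_mul_transpose_sub_of_le_singularValueT {p q : ℕ}
    {R : Matrix (Fin p) (Fin q) ℝ} {ω : ℝ} (hω : 0 ≤ ω) (h : ∀ i, ω ≤ R.singularValueT i) :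
    (R * Rᵀ - ω ^ 2 • 1).PosSemidef := by
  rw [← conjTranspose_eq_transpose_of_trivial,
    (isHermitian_mul_conjTranspose_self R).posSemidef_sub_smul_one_iff]
  intro i
  rw [← Real.le_sqrt (by positivity) (eigenvalues_self_mul_conjTranspose_nonneg R i)]
  exact h i

theorem norm_toEuclideanLin_apply_le [Fintype m] [Fintype n] [DecidableEq n]
    (A : Matrix m n ℝ) (v : EuclideanSpace ℝ n) : ‖toEuclideanLin A v‖ ≤ ‖A‖ * ‖v‖ :=
  (LinearMap.toContinuousLinearMap (toEuclideanLin A)).le_opNorm v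

theorem toEuclideanLin_mul_apply [Fintype n] [DecidableEq n] [Fintype k] [DecidableEq k]
    (A : Matrix m n ℝ) (B : Matrix n k ℝ) (v : EuclideanSpace ℝ k) :
    toEuclideanLin (A * B) v = toEuclideanLin A (toEuclideanLin B v) := by
  simp

/-- `P (R A P)⁻¹ R` with `P = Rᵀ`: the Galerkin approximation of `A⁻¹` on the range of `P`. -/
def coarseInverse [Fintype m] [DecidableEq m] [Fintype n] (A : Matrix n n ℝ)
    (R : Matrix m n ℝ) : Matrix n n ℝ :=
  Rᵀ * (R * A * Rᵀ)⁻¹ * R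

@[simp]
theorem coarseInverse_one [Fintype n] [DecidableEq n] (A : Matrix n n ℝ) :
    coarseInverse A (1 : Matrix n n ℝ) = A⁻¹ := by
  simp [coarseInverse]

theorem mul_mul_coarseInverse [Fintype m] [DecidableEq m] [Fintype n] {A : Matrix n n ℝ}
    {R : Matrix m n ℝ} (h : IsUnit (R * A * Rᵀ).det) : R * A * coarseInverse A R = R := by
  rw [coarseInverse, ← Matrix.mul_assoc, ← Matrix.mul_assoc, mul_nonsing_inv _ h, Matrix.one_mul]

theorem l2_opNorm_coarseInverse_le [Fintype m] [DecidableEq m] [Fintype n] [DecidableEq n]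
    {A : Matrix n n ℝ} {R : Matrix m n ℝ} {c : ℝ} (hc : 0 < c)
    (h : (R * A * Rᵀ - c • 1).PosSemidef) : ‖coarseInverse A R‖ ≤ ‖R‖ ^ 2 / c :=
  calc ‖coarseInverse A R‖ ≤ ‖Rᵀ‖ * ‖(R * A * Rᵀ)⁻¹‖ * ‖R‖ :=
        (l2_opNorm_mul _ _).trans (by gcongr; exact l2_opNorm_mul _ _)
    _ ≤ ‖R‖ * c⁻¹ * ‖R‖ := by
        rw [← conjTranspose_eq_transpose_of_trivial, l2_opNorm_conjTranspose]
        gcongr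
        exact l2_opNorm_inv_le hc h
    _ = ‖R‖ ^ 2 / c := by ring

end Matrix

section CoarseStep

variable {m n : Type*} [Fintype m] [DecidableEq m] [Fintype n] [DecidableEq n]

def coarseStep (G : EuclideanSpace ℝ n → EuclideanSpace ℝ n)
    (H : EuclideanSpace ℝ n → Matrix n n ℝ) (R : Matrix m n ℝ) (x : EuclideanSpace ℝ n) :
    EuclideanSpace ℝ n :=
  x - toEuclideanLin (coarseInverse (H x) R) (G x)

variable {G : EuclideanSpace ℝ n → EuclideanSpace ℝ n} {H : EuclideanSpace ℝ n → Matrix n n ℝ}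
  {L : ℝ}

theorem norm_apply_coarseStep_le (hG : ∀ y, HasFDerivAt G (toEuclideanCLM (𝕜 := ℝ) (H y)) y)
    (hH : ∀ y z, ‖H y - H z‖ ≤ L * ‖y - z‖) (R : Matrix m n ℝ) (x : EuclideanSpace ℝ n)
    (hR : IsUnit (R * H x * Rᵀ).det) :
    ‖toEuclideanLin R (G (coarseStep G H R x))‖ ≤
      ‖R‖ * (L / 2 * ‖toEuclideanLin (coarseInverse (H x) R) (G x)‖ ^ 2) := by
  set d := toEuclideanLin (coarseInverse (H x) R) (G x)
  have hRHd : toEuclideanLin R (toEuclideanCLM (𝕜 := ℝ) (H x) d) = toEuclideanLin R (G x) := by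
    change toEuclideanLin R (toEuclideanLin (H x) d) = _
    rw [← toEuclideanLin_mul_apply, ← toEuclideanLin_mul_apply, mul_mul_coarseInverse hR]
  have htaylor := norm_sub_sub_fderiv_le_of_lipschitz hG
    (fun y z ↦ by rw [← map_sub, l2_opNorm_toEuclideanCLM]; exact hH y z) x (-d)
  calc ‖toEuclideanLin R (G (x - d))‖
      = ‖toEuclideanLin R (G (x + -d) - G x - toEuclideanCLM (𝕜 := ℝ) (H x) (-d))‖ := by
        rw [map_sub, map_sub, map_neg, map_neg, hRHd, sub_neg_eq_add, sub_add_cancel,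
          sub_eq_add_neg]
    _ ≤ ‖R‖ * (L / 2 * ‖-d‖ ^ 2) := (norm_toEuclideanLin_apply_le _ _).trans (by gcongr)
    _ = ‖R‖ * (L / 2 * ‖d‖ ^ 2) := by rw [norm_neg]

theorem norm_apply_coarseStep_le_of_bounds
    (hG : ∀ y, HasFDerivAt G (toEuclideanCLM (𝕜 := ℝ) (H y)) y)
    (hH : ∀ y z, ‖H y - H z‖ ≤ L * ‖y - z‖) (hL : 0 ≤ L) {μ ω ξ : ℝ} (hμ : 0 < μ) (hω : 0 < ω)
    (R : Matrix m n ℝ) (x : EuclideanSpace ℝ n) (hHx : (H x - μ • 1).PosSemidef)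
    (hRω : (R * Rᵀ - ω ^ 2 • 1).PosSemidef) (hRξ : ‖R‖ ≤ ξ) :
    ‖toEuclideanLin R (G (coarseStep G H R x))‖ ≤
      L * ξ ^ 5 / (2 * μ ^ 2 * ω ^ 4) * ‖G x‖ ^ 2 := by
  have hc : 0 < μ * ω ^ 2 := by positivity
  have hξ : 0 ≤ ξ := (norm_nonneg R).trans hRξ
  have hM := hHx.mul_mul_transpose_sub_smul_one hμ.le hRω
  have hd : ‖toEuclideanLin (coarseInverse (H x) R) (G x)‖ ≤ ξ ^ 2 / (μ * ω ^ 2) * ‖G x‖ :=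
    (norm_toEuclideanLin_apply_le _ _).trans <| by
      gcongr
      exact (l2_opNorm_coarseInverse_le hc hM).trans (by gcongr)
  calc _ ≤ ‖R‖ * (L / 2 * ‖toEuclideanLin (coarseInverse (H x) R) (G x)‖ ^ 2) :=
        norm_apply_coarseStep_le hG hH R x
          ((isUnit_iff_isUnit_det _).mp (hM.posDef_of_sub_smul_one hc).isUnit)
    _ ≤ ξ * (L / 2 * (ξ ^ 2 / (μ * ω ^ 2) * ‖G x‖) ^ 2) := by gcongr
    _ = L * ξ ^ 5 / (2 * μ ^ 2 * ω ^ 4) * ‖G x‖ ^ 2 := by field_simp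

end CoarseStep

theorem aml_newton_quadratic_rate_xi_gt_one_general
    {n : ℕ}
    (f : EuclideanSpace ℝ (Fin n) → ℝ)
    (Hess : EuclideanSpace ℝ (Fin n) → Matrix (Fin n) (Fin n) ℝ)
    (hHess : ∀ y, HasFDerivAt (gradient f) (Matrix.toEuclideanCLM (𝕜 := ℝ) (Hess y)) y)
    (μ L : ℝ) (hμ : 0 < μ) (hL : 0 < L)
    (hsc : ∀ y, (Hess y - μ • (1 : Matrix (Fin n) (Fin n) ℝ)).PosSemidef)
    (hLip : ∀ y z, Matrix.specNorm (Hess y - Hess z) ≤ L * ‖y - z‖)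
    (σ : ℝ) (hσ0 : 0 < σ) (hσ1 : σ ≤ 1)
    (ω ξ : ℝ) (hω : 0 < ω) (hωξ : ω ≤ ξ) (hξ : 1 < ξ)
    (x xp : EuclideanSpace ℝ (Fin n))
    (hstep :
      (∃ p : ℕ, ∃ R : Matrix (Fin p) (Fin n) ℝ, p ≤ n ∧ R.rank = p ∧
        (∀ i, R.singularValueT i ∈ Set.Icc ω ξ) ∧
        xp = x - Matrix.toEuclideanLin (Rᵀ * (R * Hess x * Rᵀ)⁻¹ * R) (gradient f x) ∧
        σ * ‖gradient f xp‖ ≤ ‖Matrix.toEuclideanLin R (gradient f xp)‖) ∨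
      xp = x - Matrix.toEuclideanLin (Hess x)⁻¹ (gradient f x)) :
    ‖gradient f xp‖ ≤ L * ξ ^ 5 / (2 * σ * μ ^ 2 * ω ^ 4) * ‖gradient f x‖ ^ 2 := by
  -- `Matrix.specNorm` unfolds to the `Matrix.Norms.L2Operator` norm, so `hLip` is used as is.
  rcases hstep with ⟨p, R, -, -, hsv, rfl, hacc⟩ | rfl
  · have hcoarse := norm_apply_coarseStep_le_of_bounds hHess hLip hL.le hμ hω R x (hsc x)
      (posSemidef_mul_transpose_sub_of_le_singularValueT hω.le fun i ↦ (hsv i).1)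
      (l2_opNorm_le_of_singularValueT_le (hω.le.trans hωξ) fun i ↦ (hsv i).2)
    rw [show L * ξ ^ 5 / (2 * σ * μ ^ 2 * ω ^ 4) = L * ξ ^ 5 / (2 * μ ^ 2 * ω ^ 4) / σ by
      field_simp, div_mul_eq_mul_div, le_div_iff₀ hσ0, mul_comm]
    exact hacc.trans hcoarse
  · have hnewton := norm_apply_coarseStep_le_of_bounds hHess hLip hL.le hμ one_pos 1 x (hsc x)
      (by simpa using PosSemidef.zero) l2_opNorm_one_le
    simp only [coarseStep, coarseInverse_one, toLpLin_one, LinearMap.id_apply, one_pow,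
      mul_one] at hnewton
    have hσω : σ * ω ^ 4 ≤ ξ ^ 5 := calc
      σ * ω ^ 4 ≤ 1 * ξ ^ 4 := by gcongr
      _ ≤ ξ ^ 5 := by rw [one_mul]; exact pow_le_pow_right₀ hξ.le (by norm_num)
    refine hnewton.trans (mul_le_mul_of_nonneg_right ?_ (by positivity))
    rw [div_le_div_iff₀ (by positivity) (by positivity)]
    nlinarith [mul_le_mul_of_nonneg_left hσω (by positivity : 0 ≤ 2 * L * μ ^ 2)]

/-- Theorem 4.3, case `ξ > 1`. One step of the adaptive multilevel Newton
method (either an accepted coarse step or a full Newton step) satisfies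
`‖∇f(x⁺)‖ ≤ (Lξ⁵/(2σμ²ω⁴)) ‖∇f(x)‖²`. -/
theorem aml_newton_quadratic_rate_xi_gt_one
    {n : ℕ}
    (f : EuclideanSpace ℝ (Fin n) → ℝ)
    (hf : ContDiff ℝ 2 f)
    (Hess : EuclideanSpace ℝ (Fin n) → Matrix (Fin n) (Fin n) ℝ)
    (hHess : ∀ y, HasFDerivAt (gradient f) (Matrix.toEuclideanCLM (𝕜 := ℝ) (Hess y)) y)
    (μ L : ℝ) (hμ : 0 < μ) (hL : 0 < L)
    (hsc : ∀ y, (Hess y - μ • (1 : Matrix (Fin n) (Fin n) ℝ)).PosSemidef)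
    (hLip : ∀ y z, Matrix.specNorm (Hess y - Hess z) ≤ L * ‖y - z‖)
    (σ : ℝ) (hσ0 : 0 < σ) (hσ1 : σ ≤ 1)
    (ω ξ : ℝ) (hω : 0 < ω) (hωξ : ω ≤ ξ) (hξ : 1 < ξ)
    (x xp : EuclideanSpace ℝ (Fin n))
    (hstep :
      (∃ p : ℕ, ∃ R : Matrix (Fin p) (Fin n) ℝ, p ≤ n ∧ R.rank = p ∧
        (∀ i, R.singularValueT i ∈ Set.Icc ω ξ) ∧
        xp = x - Matrix.toEuclideanLin (Rᵀ * (R * Hess x * Rᵀ)⁻¹ * R) (gradient f x) ∧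
        σ * ‖gradient f xp‖ ≤ ‖Matrix.toEuclideanLin R (gradient f xp)‖) ∨
      xp = x - Matrix.toEuclideanLin (Hess x)⁻¹ (gradient f x)) :
    ‖gradient f xp‖ ≤ L * ξ ^ 5 / (2 * σ * μ ^ 2 * ω ^ 4) * ‖gradient f x‖ ^ 2 :=
  aml_newton_quadratic_rate_xi_gt_one_general f Hess hHess μ L hμ hL hsc hLip σ hσ0 hσ1 ω ξ hω hωξ
    hξ x xp hstep

end
end

section
/- Let f : ℝⁿ → ℝ be twice continuously differentiable and μ-strongly convex with μ > 0. Let R ∈ ℝ^{p×n} have full row rank p ≤ n, P := Rᵀ, and suppose all singular values of P lie in [ω, ξ] with 0 < ω ≤ ξ. Then for every x ∈ ℝⁿ, the coarse direction d := −P(R∇²f(x)P)⁻¹R∇f(x) satisfies ‖d‖ ≤ (ξ/(μω²)) ‖R∇f(x)‖. -/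
/-!
Put `H := ∇²f(x)`, `A := R H Rᵀ`, `z := R ∇f(x)` and `w := A⁻¹ z`, so that `d = -Rᵀ w`.
The singular-value bounds say `ω² ≤ R Rᵀ ≤ ξ²` in the Loewner order, i.e.
`ω ‖w‖ ≤ ‖Rᵀ w‖ ≤ ξ ‖w‖`. With `H ≥ μ` this gives
`μ ω² ‖w‖² ≤ ⟪Rᵀ w, H Rᵀ w⟫ = ⟪w, A w⟫ = ⟪w, z⟫ ≤ ‖w‖ ‖z‖`, so `A` is invertible and
`‖w‖ ≤ ‖z‖ / (μ ω²)`; hence `‖d‖ ≤ ξ ‖w‖ ≤ ξ / (μ ω²) ‖z‖`.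
-/

open Matrix

noncomputable section

open scoped MatrixOrder RealInnerProductSpace

theorem mul_norm_le_norm_of_mul_norm_sq_le_inner {E : Type*} [NormedAddCommGroup E]
    [InnerProductSpace ℝ E] {c : ℝ} {x y : E} (h : c * ‖x‖ ^ 2 ≤ ⟪x, y⟫) : c * ‖x‖ ≤ ‖y‖ := by
  rcases (norm_nonneg x).eq_or_lt with hx | hx
  · simp [← hx]
  · nlinarith [real_inner_le_norm x y]

namespace Matrix

variable {m n : Type*} [Fintype m] [Fintype n] [DecidableEq m] [DecidableEq n]

theorem IsHermitian.posSemidef_sub_smul_one {M : Matrix n n ℝ} (hM : M.IsHermitian) {a : ℝ}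
    (h : ∀ i, a ≤ hM.eigenvalues i) : (M - a • 1).PosSemidef := by
  rw [← nonneg_iff_posSemidef, sub_nonneg, ← Algebra.algebraMap_eq_smul_one,
    algebraMap_le_iff_le_spectrum hM.isSelfAdjoint, hM.spectrum_real_eq_range_eigenvalues]
  rintro _ ⟨i, rfl⟩
  exact h i

theorem IsHermitian.posSemidef_smul_one_sub {M : Matrix n n ℝ} (hM : M.IsHermitian) {b : ℝ}
    (h : ∀ i, hM.eigenvalues i ≤ b) : (b • 1 - M).PosSemidef := by
  rw [← nonneg_iff_posSemidef, sub_nonneg, ← Algebra.algebraMap_eq_smul_one,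
    le_algebraMap_iff_spectrum_le hM.isSelfAdjoint, hM.spectrum_real_eq_range_eigenvalues]
  rintro _ ⟨i, rfl⟩
  exact h i

theorem inner_toEuclideanLin_sub_smul_one (M : Matrix n n ℝ) (a : ℝ) (v : EuclideanSpace ℝ n) :
    ⟪v, (M - a • 1).toEuclideanLin v⟫ = ⟪v, M.toEuclideanLin v⟫ - a * ‖v‖ ^ 2 := by
  simp [inner_sub_right, inner_smul_right]

theorem PosSemidef.mul_norm_sq_le_inner_toEuclideanLin {M : Matrix n n ℝ} {a : ℝ}
    (h : (M - a • 1).PosSemidef) (v : EuclideanSpace ℝ n) :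
    a * ‖v‖ ^ 2 ≤ ⟪v, M.toEuclideanLin v⟫ := by
  have := (isPositive_toEuclideanLin_iff.2 h).inner_nonneg_right v
  rw [inner_toEuclideanLin_sub_smul_one] at this
  linarith

theorem PosSemidef.inner_toEuclideanLin_le_mul_norm_sq {M : Matrix n n ℝ} {b : ℝ}
    (h : (b • 1 - M).PosSemidef) (v : EuclideanSpace ℝ n) :
    ⟪v, M.toEuclideanLin v⟫ ≤ b * ‖v‖ ^ 2 := by
  have := (isPositive_toEuclideanLin_iff.2 h).inner_nonneg_right v
  rw [← neg_sub, map_neg, LinearMap.neg_apply, inner_neg_right,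
    inner_toEuclideanLin_sub_smul_one] at this
  linarith

theorem inner_toEuclideanLin_transpose_left (R : Matrix m n ℝ) (w : EuclideanSpace ℝ m)
    (v : EuclideanSpace ℝ n) : ⟪Rᵀ.toEuclideanLin w, v⟫ = ⟪w, R.toEuclideanLin v⟫ := by
  rw [← conjTranspose_eq_transpose_of_trivial, toEuclideanLin_conjTranspose_eq_adjoint,
    LinearMap.adjoint_inner_left]

theorem norm_sq_toEuclideanLin_transpose (R : Matrix m n ℝ) (w : EuclideanSpace ℝ m) :
    ‖Rᵀ.toEuclideanLin w‖ ^ 2 = ⟪w, (R * Rᵀ).toEuclideanLin w⟫ := by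
  rw [← real_inner_self_eq_norm_sq, inner_toEuclideanLin_transpose_left, toLpLin_mul_same,
    LinearMap.comp_apply]

theorem inner_toEuclideanLin_mul_mul_transpose (R : Matrix m n ℝ) (H : Matrix n n ℝ)
    (w : EuclideanSpace ℝ m) :
    ⟪w, (R * H * Rᵀ).toEuclideanLin w⟫ =
      ⟪Rᵀ.toEuclideanLin w, H.toEuclideanLin (Rᵀ.toEuclideanLin w)⟫ := by
  rw [inner_toEuclideanLin_transpose_left, toLpLin_mul_same, toLpLin_mul_same]
  rfl

theorem isUnit_det_of_mul_norm_sq_le_inner {A : Matrix n n ℝ} {c : ℝ} (hc : 0 < c)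
    (hA : ∀ w, c * ‖w‖ ^ 2 ≤ ⟪w, A.toEuclideanLin w⟫) : IsUnit A.det := by
  rw [isUnit_iff_ne_zero, ne_eq, ← exists_mulVec_eq_zero_iff]
  rintro ⟨v, hv, hAv⟩
  have hpos : 0 < c * ‖WithLp.toLp 2 v‖ := mul_pos hc (norm_pos_iff.2 (by simpa using hv))
  have hle := mul_norm_le_norm_of_mul_norm_sq_le_inner (hA (WithLp.toLp 2 v))
  rw [toLpLin_toLp, toLin'_apply, hAv, WithLp.toLp_zero, norm_zero] at hle
  linarith

theorem norm_toEuclideanLin_inv_le {A : Matrix n n ℝ} {c : ℝ} (hc : 0 < c)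
    (hA : ∀ w, c * ‖w‖ ^ 2 ≤ ⟪w, A.toEuclideanLin w⟫) (z : EuclideanSpace ℝ n) :
    ‖A⁻¹.toEuclideanLin z‖ ≤ c⁻¹ * ‖z‖ := by
  have hAA : A * A⁻¹ = 1 := mul_nonsing_inv A (isUnit_det_of_mul_norm_sq_le_inner hc hA)
  have := mul_norm_le_norm_of_mul_norm_sq_le_inner (hA (A⁻¹.toEuclideanLin z))
  rw [← LinearMap.comp_apply, ← toLpLin_mul_same, hAA, toLpLin_one, LinearMap.id_apply] at this
  rw [le_inv_mul_iff₀ hc]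
  exact this

theorem PosSemidef.mul_sq_mul_norm_sq_le_inner_mul_mul_transpose {R : Matrix m n ℝ}
    {H : Matrix n n ℝ} {μ ω : ℝ} (hH : (H - μ • 1).PosSemidef) (hμ : 0 ≤ μ) (hω : 0 ≤ ω)
    (hR : ∀ w, ω * ‖w‖ ≤ ‖Rᵀ.toEuclideanLin w‖) (w : EuclideanSpace ℝ m) :
    μ * ω ^ 2 * ‖w‖ ^ 2 ≤ ⟪w, (R * H * Rᵀ).toEuclideanLin w⟫ :=
  calc μ * ω ^ 2 * ‖w‖ ^ 2 = μ * (ω * ‖w‖) ^ 2 := by ring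
    _ ≤ μ * ‖Rᵀ.toEuclideanLin w‖ ^ 2 := by gcongr; exact hR w
    _ ≤ ⟪Rᵀ.toEuclideanLin w, H.toEuclideanLin (Rᵀ.toEuclideanLin w)⟫ :=
      hH.mul_norm_sq_le_inner_toEuclideanLin _
    _ = ⟪w, (R * H * Rᵀ).toEuclideanLin w⟫ :=
      (inner_toEuclideanLin_mul_mul_transpose R H w).symm

end Matrix

theorem Matrix.mul_norm_le_norm_toEuclideanLin_transpose {p n : ℕ} (R : Matrix (Fin p) (Fin n) ℝ)
    {ω : ℝ} (hω : 0 ≤ ω) (h : ∀ i, ω ≤ R.singularValueT i) (w : EuclideanSpace ℝ (Fin p)) :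
    ω * ‖w‖ ≤ ‖Rᵀ.toEuclideanLin w‖ := by
  have hRR := isHermitian_mul_conjTranspose_self R
  have hev : ∀ i, ω ^ 2 ≤ hRR.eigenvalues i := fun i =>
    (Real.le_sqrt hω (eigenvalues_self_mul_conjTranspose_nonneg R i)).1 (h i)
  have := (hRR.posSemidef_sub_smul_one hev).mul_norm_sq_le_inner_toEuclideanLin w
  rw [conjTranspose_eq_transpose_of_trivial, ← norm_sq_toEuclideanLin_transpose, ← mul_pow] at this
  exact le_of_sq_le_sq this (norm_nonneg _)

theorem Matrix.norm_toEuclideanLin_transpose_le {p n : ℕ} (R : Matrix (Fin p) (Fin n) ℝ)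
    {ξ : ℝ} (hξ : 0 ≤ ξ) (h : ∀ i, R.singularValueT i ≤ ξ) (w : EuclideanSpace ℝ (Fin p)) :
    ‖Rᵀ.toEuclideanLin w‖ ≤ ξ * ‖w‖ := by
  have hRR := isHermitian_mul_conjTranspose_self R
  have hev : ∀ i, hRR.eigenvalues i ≤ ξ ^ 2 := fun i => (Real.sqrt_le_left hξ).1 (h i)
  have := (hRR.posSemidef_smul_one_sub hev).inner_toEuclideanLin_le_mul_norm_sq w
  rw [conjTranspose_eq_transpose_of_trivial, ← norm_sq_toEuclideanLin_transpose, ← mul_pow] at this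
  exact le_of_sq_le_sq this (by positivity)

theorem norm_coarse_direction_le_general
    {n p : ℕ}
    (f : EuclideanSpace ℝ (Fin n) → ℝ)
    (Hess : EuclideanSpace ℝ (Fin n) → Matrix (Fin n) (Fin n) ℝ)
    (μ : ℝ) (hμ : 0 < μ)
    (hsc : ∀ y, (Hess y - μ • (1 : Matrix (Fin n) (Fin n) ℝ)).PosSemidef)
    (R : Matrix (Fin p) (Fin n) ℝ)
    (ω ξ : ℝ) (hω : 0 < ω) (hωξ : ω ≤ ξ)
    (hsv : ∀ i, R.singularValueT i ∈ Set.Icc ω ξ) :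
    ∀ x : EuclideanSpace ℝ (Fin n),
      ‖-(Matrix.toEuclideanLin (Rᵀ * (R * Hess x * Rᵀ)⁻¹ * R) (gradient f x))‖ ≤
        ξ / (μ * ω ^ 2) * ‖Matrix.toEuclideanLin R (gradient f x)‖ := by
  intro x
  have hξ : 0 ≤ ξ := hω.le.trans hωξ
  have hcoer := (hsc x).mul_sq_mul_norm_sq_le_inner_mul_mul_transpose hμ.le hω.le
    (R.mul_norm_le_norm_toEuclideanLin_transpose hω.le fun i => (hsv i).1)
  rw [norm_neg, toLpLin_mul_same, toLpLin_mul_same, LinearMap.comp_apply, LinearMap.comp_apply]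
  calc _ ≤ ξ * ‖(R * Hess x * Rᵀ)⁻¹.toEuclideanLin (R.toEuclideanLin (gradient f x))‖ :=
        R.norm_toEuclideanLin_transpose_le hξ (fun i => (hsv i).2) _
    _ ≤ ξ * ((μ * ω ^ 2)⁻¹ * ‖R.toEuclideanLin (gradient f x)‖) := by
        gcongr
        exact norm_toEuclideanLin_inv_le (by positivity) hcoer _
    _ = ξ / (μ * ω ^ 2) * ‖R.toEuclideanLin (gradient f x)‖ := by ring

/-- The coarse direction `d = −P(R∇²f(x)P)⁻¹R∇f(x)` satisfies
`‖d‖ ≤ (ξ/(μω²)) ‖R∇f(x)‖`. -/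
theorem norm_coarse_direction_le
    {n p : ℕ} (hp : p ≤ n)
    (f : EuclideanSpace ℝ (Fin n) → ℝ)
    (hf : ContDiff ℝ 2 f)
    (Hess : EuclideanSpace ℝ (Fin n) → Matrix (Fin n) (Fin n) ℝ)
    (hHess : ∀ y, HasFDerivAt (gradient f) (Matrix.toEuclideanCLM (𝕜 := ℝ) (Hess y)) y)
    (μ : ℝ) (hμ : 0 < μ)
    (hsc : ∀ y, (Hess y - μ • (1 : Matrix (Fin n) (Fin n) ℝ)).PosSemidef)
    (R : Matrix (Fin p) (Fin n) ℝ) (hR : R.rank = p)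
    (ω ξ : ℝ) (hω : 0 < ω) (hωξ : ω ≤ ξ)
    (hsv : ∀ i, R.singularValueT i ∈ Set.Icc ω ξ) :
    ∀ x : EuclideanSpace ℝ (Fin n),
      ‖-(Matrix.toEuclideanLin (Rᵀ * (R * Hess x * Rᵀ)⁻¹ * R) (gradient f x))‖ ≤
        ξ / (μ * ω ^ 2) * ‖Matrix.toEuclideanLin R (gradient f x)‖ :=
  norm_coarse_direction_le_general f Hess μ hμ hsc R ω ξ hω hωξ hsv

end
end
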